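/- arXiv:1110.6356 — 7 statements merged into one kernel-verified Lean document; each statement's English description precedes it below -/
import Mathlib

section
/- In the q-boson algebra with t = q², the relation β^a (β*/(1−t))^b = Σ_{r=0}^{min(a,b)} t^{(a−r)(b−r)} [b choose r]_t ([a]!/[a−r]!) (β*/(1−t))^{b−r} β^{a−r} holds, where [x] = (1−t^x)/(1−t), [a]! = [a][a−1]⋯[1], and [b choose r]_t is the t-binomial coefficient. -/
open Finset

/-- The t-integer `[m] = (1 − t^m)/(1 − t) = 1 + t + ⋯ + t^{m−1}`. -/
def qInt {K : Type*} [CommRing K] (t : K) (m : ℕ) : K :=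
  ∑ i ∈ Finset.range m, t ^ i

/-- The Gaussian (t-)binomial coefficient `[m choose r]_t`, defined by the standard
recursion `[m+1 choose r+1]_t = [m choose r]_t + t^{r+1} [m choose r+1]_t`; it equals
`(t;t)_m / ((t;t)_r (t;t)_{m−r})` for `r ≤ m` and vanishes for `r > m`. -/
def gaussBinom {K : Type*} [CommRing K] (t : K) : ℕ → ℕ → K
  | _, 0 => 1
  | 0, _ + 1 => 0
  | m + 1, r + 1 => gaussBinom t m r + t ^ (r + 1) * gaussBinom t m (r + 1)

lemma qInt_zero {K : Type*} [CommRing K] (t : K) : qInt t 0 = 0 := rfl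

lemma qInt_succ {K : Type*} [CommRing K] (t : K) (a : ℕ) :
    qInt t (a + 1) = qInt t a + t ^ a := Finset.sum_range_succ _ _

lemma gaussBinom_zero {K : Type*} [CommRing K] (t : K) (m : ℕ) :
    gaussBinom t m 0 = 1 := by cases m <;> rfl

lemma gaussBinom_succ {K : Type*} [CommRing K] (t : K) (m r : ℕ) :
    gaussBinom t (m + 1) (r + 1)
      = gaussBinom t m r + t ^ (r + 1) * gaussBinom t m (r + 1) := rfl

lemma gaussBinom_eq_zero {K : Type*} [CommRing K] (t : K) :
    ∀ m r : ℕ, m < r → gaussBinom t m r = 0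
  | 0, _ + 1, _ => rfl
  | m + 1, r + 1, h => by
      rw [gaussBinom_succ, gaussBinom_eq_zero t m r (by omega),
        gaussBinom_eq_zero t m (r + 1) (by omega)]
      ring

lemma prod_qInt_eq_zero {K : Type*} [CommRing K] (t : K) {a r : ℕ} (h : a < r) :
    ∏ i ∈ Finset.range r, qInt t (a - i) = 0 :=
  Finset.prod_eq_zero (Finset.mem_range.mpr h) (by simp [qInt])

lemma prod_qInt_succ {K : Type*} [CommRing K] (t : K) (a r : ℕ) :
    ∏ i ∈ Finset.range (r + 1), qInt t (a - i)
      = qInt t a * ∏ i ∈ Finset.range r, qInt t (a - 1 - i) := by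
  rw [Finset.prod_range_succ']
  simp only [Nat.sub_zero]
  rw [mul_comm]
  congr 1
  refine Finset.prod_congr rfl fun i _ => ?_
  congr 1
  omega

lemma coeff_id {K : Type*} [CommRing K] (t : K) (a b r : ℕ) (hr : r ≤ b) :
    t ^ ((a - (r + 1)) * (b + 1 - (r + 1))) * gaussBinom t (b + 1) (r + 1) *
        ∏ i ∈ Finset.range (r + 1), qInt t (a - i)
      = t ^ a * (t ^ ((a - (r + 1)) * (b - (r + 1))) * gaussBinom t b (r + 1) *
          ∏ i ∈ Finset.range (r + 1), qInt t (a - i))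
      + qInt t a * (t ^ ((a - 1 - r) * (b - r)) * gaussBinom t b r *
          ∏ i ∈ Finset.range r, qInt t (a - 1 - i)) := by
  rw [prod_qInt_succ, gaussBinom_succ]
  have h1 : b + 1 - (r + 1) = b - r := by omega
  have h2 : a - (r + 1) = a - 1 - r := by omega
  rw [h1, h2]
  by_cases ha : a ≤ r
  · have h0 : qInt t a * ∏ i ∈ Finset.range r, qInt t (a - 1 - i) = 0 := by
      rcases a with _ | n
      · simp [qInt_zero]
      · rw [prod_qInt_eq_zero t (show n + 1 - 1 < r by omega), mul_zero]
    linear_combination (t ^ ((a - 1 - r) * (b - r)) * (gaussBinom t b r + t ^ (r + 1) * gaussBinom t b (r + 1))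
      - t ^ a * (t ^ ((a - 1 - r) * (b - (r + 1))) * gaussBinom t b (r + 1))
      - t ^ ((a - 1 - r) * (b - r)) * gaussBinom t b r) * h0
  · by_cases hb : r = b
    · subst hb
      rw [gaussBinom_eq_zero t r (r + 1) (by omega)]
      ring
    · obtain ⟨d, hd⟩ : ∃ d, a = r + 1 + d := ⟨a - (r + 1), by omega⟩
      obtain ⟨e, he⟩ : ∃ e, b = r + 1 + e := ⟨b - (r + 1), by omega⟩
      subst hd he
      have e1 : r + 1 + d - 1 - r = d := by omega
      have e2 : r + 1 + e - r = e + 1 := by omega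
      have e3 : r + 1 + e - (r + 1) = e := by omega
      rw [e1, e2, e3]
      ring

lemma pow_mul_B {K : Type*} [Field K] {A : Type*} [Ring A] [Algebra K A]
    (t : K) (β B : A) (hB : β * B = t • (B * β) + 1) :
    ∀ a : ℕ, β ^ a * B = t ^ a • (B * β ^ a) + qInt t a • β ^ (a - 1)
  | 0 => by simp [qInt_zero]
  | a + 1 => by
    have IH := pow_mul_B t β B hB a
    have hstep : qInt t a • (β * β ^ (a - 1)) = qInt t a • β ^ a := by
      rcases a with _ | n
      · simp [qInt_zero]
      · rw [show n + 1 - 1 = n from rfl, ← pow_succ']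
    calc β ^ (a + 1) * B = β * (β ^ a * B) := by rw [pow_succ', mul_assoc]
      _ = β * (t ^ a • (B * β ^ a) + qInt t a • β ^ (a - 1)) := by rw [IH]
      _ = t ^ a • (β * B * β ^ a) + qInt t a • (β * β ^ (a - 1)) := by
          rw [mul_add, mul_smul_comm, mul_smul_comm, mul_assoc]
      _ = t ^ a • ((t • (B * β) + 1) * β ^ a) + qInt t a • β ^ a := by rw [hB, hstep]
      _ = t ^ (a + 1) • (B * β ^ (a + 1)) + qInt t (a + 1) • β ^ a := by
          rw [add_mul, smul_mul_assoc, one_mul, mul_assoc, ← pow_succ', smul_add,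
            smul_smul, qInt_succ, add_smul, pow_succ t a]
          abel

lemma reorder_aux {K : Type*} [Field K] {A : Type*} [Ring A] [Algebra K A]
    (t : K) (β B : A) (hB : β * B = t • (B * β) + 1) :
    ∀ (b a : ℕ), β ^ a * B ^ b =
      ∑ r ∈ Finset.range (b + 1),
        (t ^ ((a - r) * (b - r)) * gaussBinom t b r * ∏ i ∈ Finset.range r, qInt t (a - i)) •
          (B ^ (b - r) * β ^ (a - r))
  | 0, a => by simp [gaussBinom_zero]
  | b + 1, a => by
    have IH1 := reorder_aux t β B hB b a
    have IH2 := reorder_aux t β B hB b (a - 1)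
    have key : β ^ a * B ^ (b + 1)
        = t ^ a • (B * (β ^ a * B ^ b)) + qInt t a • (β ^ (a - 1) * B ^ b) := by
      rw [pow_succ' B b, ← mul_assoc, pow_mul_B t β B hB a, add_mul, smul_mul_assoc,
        smul_mul_assoc, mul_assoc]
    rw [key, IH1, IH2, Finset.mul_sum]
    have e1 : ∑ r ∈ Finset.range (b + 1),
        B * ((t ^ ((a - r) * (b - r)) * gaussBinom t b r *
            ∏ i ∈ Finset.range r, qInt t (a - i)) • (B ^ (b - r) * β ^ (a - r)))
        = ∑ r ∈ Finset.range (b + 1),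
        (t ^ ((a - r) * (b - r)) * gaussBinom t b r *
            ∏ i ∈ Finset.range r, qInt t (a - i)) • (B ^ (b + 1 - r) * β ^ (a - r)) := by
      refine Finset.sum_congr rfl fun r hr => ?_
      rw [Finset.mem_range] at hr
      rw [mul_smul_comm, ← mul_assoc, ← pow_succ', show b - r + 1 = b + 1 - r by omega]
    rw [e1, Finset.smul_sum, Finset.smul_sum]
    have e2 : ∑ r ∈ Finset.range (b + 1),
        t ^ a • ((t ^ ((a - r) * (b - r)) * gaussBinom t b r *
            ∏ i ∈ Finset.range r, qInt t (a - i)) • (B ^ (b + 1 - r) * β ^ (a - r)))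
        = ∑ r ∈ Finset.range (b + 1),
        (t ^ a * (t ^ ((a - r) * (b - r)) * gaussBinom t b r *
            ∏ i ∈ Finset.range r, qInt t (a - i))) • (B ^ (b + 1 - r) * β ^ (a - r)) := by
      refine Finset.sum_congr rfl fun r hr => smul_smul _ _ _
    have e3 : ∑ r ∈ Finset.range (b + 1),
        qInt t a • ((t ^ ((a - 1 - r) * (b - r)) * gaussBinom t b r *
            ∏ i ∈ Finset.range r, qInt t (a - 1 - i)) • (B ^ (b - r) * β ^ (a - 1 - r)))
        = ∑ r ∈ Finset.range (b + 1),
        (qInt t a * (t ^ ((a - 1 - r) * (b - r)) * gaussBinom t b r *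
            ∏ i ∈ Finset.range r, qInt t (a - 1 - i))) •
          (B ^ (b + 1 - (r + 1)) * β ^ (a - (r + 1))) := by
      refine Finset.sum_congr rfl fun r hr => ?_
      rw [smul_smul, show b + 1 - (r + 1) = b - r by omega,
        show a - (r + 1) = a - 1 - r by omega]
    rw [e2, e3]
    have hext : (∑ r ∈ Finset.range (b + 1),
        (t ^ a * (t ^ ((a - r) * (b - r)) * gaussBinom t b r *
            ∏ i ∈ Finset.range r, qInt t (a - i))) • (B ^ (b + 1 - r) * β ^ (a - r)))
        = ∑ r ∈ Finset.range (b + 2),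
        (t ^ a * (t ^ ((a - r) * (b - r)) * gaussBinom t b r *
            ∏ i ∈ Finset.range r, qInt t (a - i))) • (B ^ (b + 1 - r) * β ^ (a - r)) := by
      rw [Finset.sum_range_succ (n := b + 1), gaussBinom_eq_zero t b (b + 1) (by omega)]
      simp
    rw [hext]
    rw [Finset.sum_range_succ' (fun r =>
      (t ^ ((a - r) * (b + 1 - r)) * gaussBinom t (b + 1) r *
          ∏ i ∈ Finset.range r, qInt t (a - i)) • (B ^ (b + 1 - r) * β ^ (a - r))) (b + 1),
      Finset.sum_range_succ' (fun r =>
      (t ^ a * (t ^ ((a - r) * (b - r)) * gaussBinom t b r *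
          ∏ i ∈ Finset.range r, qInt t (a - i))) • (B ^ (b + 1 - r) * β ^ (a - r))) (b + 1)]
    rw [add_right_comm, ← Finset.sum_add_distrib]
    congr 1
    · refine Finset.sum_congr rfl fun r hr => ?_
      rw [Finset.mem_range] at hr
      rw [← add_smul]
      congr 1
      exact (coeff_id t a b r (by omega)).symm
    · simp only [Nat.sub_zero, Finset.range_zero, Finset.prod_empty, mul_one, gaussBinom_zero]
      rw [show a * (b + 1) = a + a * b by ring, pow_add]
      try rw [pow_add]

/-- In the q-boson algebra with `t = q²`, writing `β̃ = β*/(1−t)`,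
`β^a β̃^b = Σ_{r=0}^{min(a,b)} t^{(a−r)(b−r)} [b choose r]_t ([a]!/[a−r]!) β̃^{b−r} β^{a−r}`. -/
theorem qBoson_reordering {K : Type*} [Field K] {A : Type*} [Ring A] [Algebra K A]
    (t : K) (ht : t ≠ 1)
    (β βs : A)
    (hrel : β * βs = t • (βs * β) + (1 - t) • (1 : A))
    (a b : ℕ) :
    β ^ a * ((1 - t)⁻¹ • βs) ^ b =
      ∑ r ∈ Finset.range (min a b + 1),
        (t ^ ((a - r) * (b - r)) * gaussBinom t b r *
            ∏ i ∈ Finset.range r, qInt t (a - i)) •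
          (((1 - t)⁻¹ • βs) ^ (b - r) * β ^ (a - r)) := by
  have h1t : (1 : K) - t ≠ 0 := sub_ne_zero.mpr (Ne.symm ht)
  set B : A := (1 - t)⁻¹ • βs with hBdef
  have hB : β * B = t • (B * β) + 1 := by
    rw [hBdef, mul_smul_comm, hrel, smul_add, smul_smul, smul_smul, inv_mul_cancel₀ h1t,
      one_smul, mul_comm, ← smul_smul, smul_mul_assoc]
  rw [reorder_aux t β B hB b a]
  refine (Finset.sum_subset (Finset.range_subset_range.mpr (by omega)) fun r hr hnr => ?_).symm
  rw [Finset.mem_range] at hr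
  rw [Finset.mem_range, not_lt] at hnr
  rw [prod_qInt_eq_zero t (show a < r by omega), mul_zero, zero_smul]
end

section
/- The Jordan–Schwinger map sending E_i ↦ −q^{−N_i} β*_i β_{i+1}/(q−q^{−1}), F_i ↦ −q^{−N_{i+1}} β_i β*_{i+1}/(q−q^{−1}), K_i^{±1} ↦ q^{±N_i} (for i = 1,…,n−1) preserves the quantum Serre relations X_i² X_{i+1} − (q+q^{−1}) X_i X_{i+1} X_i + X_{i+1} X_i² = 0 and X_i X_{i+1}² − (q+q^{−1}) X_{i+1} X_i X_{i+1} + X_{i+1}² X_i = 0 for X = E, F, i.e. the images satisfy these relations in the n-fold tensor power of the q-boson algebra. -/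
section JSAux

variable {K : Type*} [Field K] {A : Type*} [Ring A] [Algebra K A]

private lemma js_serre_reduce (t k : K) (P R x y : A)
    (hPR : Commute P R) (hPx : Commute P x) (hPy : Commute P y)
    (hRx : Commute R x) (hRy : Commute R y)
    (h : x*(x*y) - t • (x*(y*x)) + y*(x*x) = 0) :
    (k•(P*x))^2 * (k•(R*y)) - t • (k•(P*x) * (k•(R*y)) * (k•(P*x)))
      + k•(R*y) * (k•(P*x))^2 = 0 := by
  have cxP : ∀ z : A, x*(P*z) = P*(x*z) := fun z => by
    rw [← mul_assoc, ← hPx.eq, mul_assoc]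
  have cxP0 : x*P = P*x := hPx.eq.symm
  have cyP : ∀ z : A, y*(P*z) = P*(y*z) := fun z => by
    rw [← mul_assoc, ← hPy.eq, mul_assoc]
  have cyP0 : y*P = P*y := hPy.eq.symm
  have cRP : ∀ z : A, R*(P*z) = P*(R*z) := fun z => by
    rw [← mul_assoc, ← hPR.eq, mul_assoc]
  have cRP0 : R*P = P*R := hPR.eq.symm
  have cxR : ∀ z : A, x*(R*z) = R*(x*z) := fun z => by
    rw [← mul_assoc, ← hRx.eq, mul_assoc]
  have cxR0 : x*R = R*x := hRx.eq.symm
  have cyR : ∀ z : A, y*(R*z) = R*(y*z) := fun z => by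
    rw [← mul_assoc, ← hRy.eq, mul_assoc]
  have cyR0 : y*R = R*y := hRy.eq.symm
  have h' : P*(P*(R*(x*(x*y)))) - t • (P*(P*(R*(x*(y*x))))) + P*(P*(R*(y*(x*x)))) = 0 := by
    have h2 : P*(P*(R*(x*(x*y) - t • (x*(y*x)) + y*(x*x)))) = 0 := by
      rw [h, mul_zero, mul_zero, mul_zero]
    simpa [mul_sub, mul_add, mul_smul_comm] using h2
  simp only [pow_two, smul_mul_assoc, mul_smul_comm, smul_smul, mul_assoc,
    cxP, cxP0, cyP, cyP0, cRP, cRP0, cxR, cxR0, cyR, cyR0]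
  linear_combination (norm := module) (k*(k*k)) • h'

private lemma js_single_site (q : K) (hq0 : q ≠ 0) (b bs N ν : A)
    (hD : b*bs - bs*b = (1 - q^2) • (N*N))
    (hNb : N*b = q⁻¹ • (b*N))
    (hNbs : N*bs = q • (bs*N))
    (h5 : N*ν = 1) (h6 : ν*N = 1) :
    (b*(b*(ν*bs)) - (q+q⁻¹) • (b*((ν*bs)*b)) + (ν*bs)*(b*b) = 0) ∧
    ((ν*bs)*((ν*bs)*b) - (q+q⁻¹) • ((ν*bs)*(b*(ν*bs))) + b*((ν*bs)*(ν*bs)) = 0) := by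
  have hbbs0 : b*bs = (1-q^2) • (N*N) + bs*b := sub_eq_iff_eq_add.mp hD
  have hbbs : ∀ z, b*(bs*z) = (1-q^2) • (N*(N*z)) + bs*(b*z) := fun z => by
    rw [← mul_assoc, hbbs0, add_mul, smul_mul_assoc, mul_assoc, mul_assoc]
  have hNb' : ∀ z, N*(b*z) = q⁻¹ • (b*(N*z)) := fun z => by
    rw [← mul_assoc, hNb, smul_mul_assoc, mul_assoc]
  have hNbs' : ∀ z, N*(bs*z) = q • (bs*(N*z)) := fun z => by
    rw [← mul_assoc, hNbs, smul_mul_assoc, mul_assoc]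
  have hbN : b*N = q • (N*b) := by rw [hNb, smul_smul, mul_inv_cancel₀ hq0, one_smul]
  have hbsN : bs*N = q⁻¹ • (N*bs) := by rw [hNbs, smul_smul, inv_mul_cancel₀ hq0, one_smul]
  have hνb0 : ν*b = q • (b*ν) := by
    have e : ν*(b*N)*ν = ν*b := by rw [mul_assoc, mul_assoc, h5, mul_one]
    calc ν*b = ν*(b*N)*ν := e.symm
      _ = q • (ν*(N*b)*ν) := by rw [hbN, mul_smul_comm, smul_mul_assoc]
      _ = q • (b*ν) := by rw [← mul_assoc ν N b, h6, one_mul]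
  have hνbs0 : ν*bs = q⁻¹ • (bs*ν) := by
    have e : ν*(bs*N)*ν = ν*bs := by rw [mul_assoc, mul_assoc, h5, mul_one]
    calc ν*bs = ν*(bs*N)*ν := e.symm
      _ = q⁻¹ • (ν*(N*bs)*ν) := by rw [hbsN, mul_smul_comm, smul_mul_assoc]
      _ = q⁻¹ • (bs*ν) := by rw [← mul_assoc ν N bs, h6, one_mul]
  have hνb' : ∀ z, ν*(b*z) = q • (b*(ν*z)) := fun z => by
    rw [← mul_assoc, hνb0, smul_mul_assoc, mul_assoc]
  have hνbs' : ∀ z, ν*(bs*z) = q⁻¹ • (bs*(ν*z)) := fun z => by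
    rw [← mul_assoc, hνbs0, smul_mul_assoc, mul_assoc]
  have hNν' : ∀ z : A, N*(ν*z) = z := fun z => by rw [← mul_assoc, h5, one_mul]
  have hνN' : ∀ z : A, ν*(N*z) = z := fun z => by rw [← mul_assoc, h6, one_mul]
  constructor <;>
  · simp only [mul_assoc, smul_mul_assoc, mul_smul_comm, smul_smul, smul_add, smul_sub,
      mul_add, add_mul, mul_sub, sub_mul, hbbs, hbbs0, hNb', hNb, hNbs', hNbs,
      hνb', hνb0, hνbs', hνbs0, hNν', hνN', h5, h6, mul_one, one_mul]
    match_scalars <;> (try (field_simp; ring)) <;> (try field_simp) <;> ring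

end JSAux

/-- The Jordan–Schwinger map
`E_i ↦ −q^{−N_i} β*_i β_{i+1}/(q−q^{−1})`, `F_i ↦ −q^{−N_{i+1}} β_i β*_{i+1}/(q−q^{−1})`,
`K_i^{±1} ↦ q^{±N_i}` (for `i = 1,…,n−1`) preserves the quantum Serre relations:
the images `E`, `F` satisfy
`X_i² X_{i+1} − (q+q^{−1}) X_i X_{i+1} X_i + X_{i+1} X_i² = 0` and
`X_i X_{i+1}² − (q+q^{−1}) X_{i+1} X_i X_{i+1} + X_{i+1}² X_i = 0` for `X = E, F`,
in the n-fold tensor power of the q-boson algebra (formalised here as any algebra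
containing elements satisfying the q-boson relations at each site `1,…,n`, with
generators at distinct sites commuting). -/
theorem jordan_schwinger_serre {K : Type*} [Field K] {A : Type*} [Ring A] [Algebra K A]
    (n : ℕ) (hn : 2 < n) (q : K) (hq0 : q ≠ 0) (hq1 : q ^ 2 ≠ 1)
    (β βs qN qNinv : ℕ → A)
    -- generators at distinct sites commute
    (hcomm : ∀ i j, 1 ≤ i → i ≤ n → 1 ≤ j → j ≤ n → i ≠ j →
      ∀ x ∈ ({β i, βs i, qN i, qNinv i} : Set A),
      ∀ y ∈ ({β j, βs j, qN j, qNinv j} : Set A), x * y = y * x)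
    -- same-site q-boson relations
    (h1 : ∀ i, 1 ≤ i → i ≤ n → β i * βs i - q ^ 2 • (βs i * β i) = (1 - q ^ 2) • (1 : A))
    (h2 : ∀ i, 1 ≤ i → i ≤ n → β i * βs i - βs i * β i = (1 - q ^ 2) • (qN i * qN i))
    (h3 : ∀ i, 1 ≤ i → i ≤ n → qN i * β i = q⁻¹ • (β i * qN i))
    (h4 : ∀ i, 1 ≤ i → i ≤ n → qN i * βs i = q • (βs i * qN i))
    (h5 : ∀ i, 1 ≤ i → i ≤ n → qN i * qNinv i = 1)
    (h6 : ∀ i, 1 ≤ i → i ≤ n → qNinv i * qN i = 1)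
    -- images of the Chevalley generators under the Jordan–Schwinger homomorphism
    (E F : ℕ → A)
    (hE : ∀ j, E j = (-(q - q⁻¹)⁻¹) • (qNinv j * (βs j * β (j + 1))))
    (hF : ∀ j, F j = (-(q - q⁻¹)⁻¹) • (qNinv (j + 1) * (β j * βs (j + 1)))) :
    ∀ i, 1 ≤ i → i + 2 ≤ n →
      (E i ^ 2 * E (i + 1) - (q + q⁻¹) • (E i * E (i + 1) * E i) + E (i + 1) * E i ^ 2 = 0 ∧
       E i * E (i + 1) ^ 2 - (q + q⁻¹) • (E (i + 1) * E i * E (i + 1)) + E (i + 1) ^ 2 * E i = 0 ∧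
       F i ^ 2 * F (i + 1) - (q + q⁻¹) • (F i * F (i + 1) * F i) + F (i + 1) * F i ^ 2 = 0 ∧
       F i * F (i + 1) ^ 2 - (q + q⁻¹) • (F (i + 1) * F i * F (i + 1)) + F (i + 1) ^ 2 * F i = 0) := by
  intro i hi1 hi2
  set k : K := -(q - q⁻¹)⁻¹ with hk
  set t : K := q + q⁻¹ with ht
  -- bounds on the three sites involved
  have hA1 : 1 ≤ i := hi1
  have hA2 : i ≤ n := by omega
  have hB1 : 1 ≤ i + 1 := by omega
  have hB2 : i + 1 ≤ n := by omega
  have hC1 : 1 ≤ i + 2 := by omega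
  have hC2 : i + 2 ≤ n := hi2
  have ne01 : i ≠ i + 1 := by omega
  have ne02 : i ≠ i + 2 := by omega
  have ne12 : i + 1 ≠ i + 2 := by omega
  -- membership helpers
  have m1 : ∀ s, β s ∈ ({β s, βs s, qN s, qNinv s} : Set A) := fun s => by simp
  have m2 : ∀ s, βs s ∈ ({β s, βs s, qN s, qNinv s} : Set A) := fun s => by simp
  have m4 : ∀ s, qNinv s ∈ ({β s, βs s, qN s, qNinv s} : Set A) := fun s => by simp
  -- atomic cross-site commutation facts
  -- sites i / i+1
  have c_νi_β1  : Commute (qNinv i) (β (i+1)) :=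
    hcomm i (i+1) hA1 hA2 hB1 hB2 ne01 _ (m4 i) _ (m1 (i+1))
  have c_βsi_β1 : Commute (βs i) (β (i+1)) :=
    hcomm i (i+1) hA1 hA2 hB1 hB2 ne01 _ (m2 i) _ (m1 (i+1))
  have c_νi_ν1 : Commute (qNinv i) (qNinv (i+1)) :=
    hcomm i (i+1) hA1 hA2 hB1 hB2 ne01 _ (m4 i) _ (m4 (i+1))
  have c_νi_βs1 : Commute (qNinv i) (βs (i+1)) :=
    hcomm i (i+1) hA1 hA2 hB1 hB2 ne01 _ (m4 i) _ (m2 (i+1))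
  have c_βsi_ν1 : Commute (βs i) (qNinv (i+1)) :=
    hcomm i (i+1) hA1 hA2 hB1 hB2 ne01 _ (m2 i) _ (m4 (i+1))
  have c_βsi_βs1 : Commute (βs i) (βs (i+1)) :=
    hcomm i (i+1) hA1 hA2 hB1 hB2 ne01 _ (m2 i) _ (m2 (i+1))
  have c_βi_ν1 : Commute (β i) (qNinv (i+1)) :=
    hcomm i (i+1) hA1 hA2 hB1 hB2 ne01 _ (m1 i) _ (m4 (i+1))
  have c_βi_βs1 : Commute (β i) (βs (i+1)) :=
    hcomm i (i+1) hA1 hA2 hB1 hB2 ne01 _ (m1 i) _ (m2 (i+1))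
  have c_βi_β1 : Commute (β i) (β (i+1)) :=
    hcomm i (i+1) hA1 hA2 hB1 hB2 ne01 _ (m1 i) _ (m1 (i+1))
  -- sites i / i+2
  have c_νi_β2 : Commute (qNinv i) (β (i+2)) :=
    hcomm i (i+2) hA1 hA2 hC1 hC2 ne02 _ (m4 i) _ (m1 (i+2))
  have c_βsi_β2 : Commute (βs i) (β (i+2)) :=
    hcomm i (i+2) hA1 hA2 hC1 hC2 ne02 _ (m2 i) _ (m1 (i+2))
  have c_βi_ν2 : Commute (β i) (qNinv (i+2)) :=
    hcomm i (i+2) hA1 hA2 hC1 hC2 ne02 _ (m1 i) _ (m4 (i+2))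
  have c_βi_βs2 : Commute (β i) (βs (i+2)) :=
    hcomm i (i+2) hA1 hA2 hC1 hC2 ne02 _ (m1 i) _ (m2 (i+2))
  -- sites i+1 / i+2
  have c_β1_β2 : Commute (β (i+1)) (β (i+2)) :=
    hcomm (i+1) (i+2) hB1 hB2 hC1 hC2 ne12 _ (m1 (i+1)) _ (m1 (i+2))
  have c_ν1_β2 : Commute (qNinv (i+1)) (β (i+2)) :=
    hcomm (i+1) (i+2) hB1 hB2 hC1 hC2 ne12 _ (m4 (i+1)) _ (m1 (i+2))
  have c_βs1_β2 : Commute (βs (i+1)) (β (i+2)) :=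
    hcomm (i+1) (i+2) hB1 hB2 hC1 hC2 ne12 _ (m2 (i+1)) _ (m1 (i+2))
  have c_β1_ν2 : Commute (β (i+1)) (qNinv (i+2)) :=
    hcomm (i+1) (i+2) hB1 hB2 hC1 hC2 ne12 _ (m1 (i+1)) _ (m4 (i+2))
  have c_β1_βs2 : Commute (β (i+1)) (βs (i+2)) :=
    hcomm (i+1) (i+2) hB1 hB2 hC1 hC2 ne12 _ (m1 (i+1)) _ (m2 (i+2))
  have c_ν1_ν2 : Commute (qNinv (i+1)) (qNinv (i+2)) :=
    hcomm (i+1) (i+2) hB1 hB2 hC1 hC2 ne12 _ (m4 (i+1)) _ (m4 (i+2))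
  have c_ν1_βs2 : Commute (qNinv (i+1)) (βs (i+2)) :=
    hcomm (i+1) (i+2) hB1 hB2 hC1 hC2 ne12 _ (m4 (i+1)) _ (m2 (i+2))
  have c_βs1_ν2 : Commute (βs (i+1)) (qNinv (i+2)) :=
    hcomm (i+1) (i+2) hB1 hB2 hC1 hC2 ne12 _ (m2 (i+1)) _ (m4 (i+2))
  have c_βs1_βs2 : Commute (βs (i+1)) (βs (i+2)) :=
    hcomm (i+1) (i+2) hB1 hB2 hC1 hC2 ne12 _ (m2 (i+1)) _ (m2 (i+2))
  -- composite elements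
  -- a = qNinv i * βs i ; b = β (i+1) ; B = qNinv (i+1) * βs (i+1) ; c = β (i+2)
  -- a' = β i ; d = qNinv (i+2) * βs (i+2)
  have cab : Commute (qNinv i * βs i) (β (i+1)) := c_νi_β1.mul_left c_βsi_β1
  have caB : Commute (qNinv i * βs i) (qNinv (i+1) * βs (i+1)) :=
    (c_νi_ν1.mul_right c_νi_βs1).mul_left (c_βsi_ν1.mul_right c_βsi_βs1)
  have cac : Commute (qNinv i * βs i) (β (i+2)) := c_νi_β2.mul_left c_βsi_β2
  have ccb : Commute (β (i+2)) (β (i+1)) := c_β1_β2.symm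
  have ccB : Commute (β (i+2)) (qNinv (i+1) * βs (i+1)) :=
    (c_ν1_β2.symm).mul_right (c_βs1_β2.symm)
  have ca'd : Commute (β i) (qNinv (i+2) * βs (i+2)) := c_βi_ν2.mul_right c_βi_βs2
  have ca'B : Commute (β i) (qNinv (i+1) * βs (i+1)) := c_βi_ν1.mul_right c_βi_βs1
  have ca'b : Commute (β i) (β (i+1)) := c_βi_β1
  have cdB : Commute (qNinv (i+2) * βs (i+2)) (qNinv (i+1) * βs (i+1)) :=
    ((c_ν1_ν2.symm).mul_right (c_βs1_ν2.symm)).mul_left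
      ((c_ν1_βs2.symm).mul_right (c_βs1_βs2.symm))
  have cdb : Commute (qNinv (i+2) * βs (i+2)) (β (i+1)) :=
    (c_β1_ν2.symm).mul_left (c_β1_βs2.symm)
  -- single-site Serre identities at site i+1
  obtain ⟨I1, I2⟩ := js_single_site q hq0 (β (i+1)) (βs (i+1)) (qN (i+1)) (qNinv (i+1))
    (h2 (i+1) hB1 hB2) (h3 (i+1) hB1 hB2) (h4 (i+1) hB1 hB2)
    (h5 (i+1) hB1 hB2) (h6 (i+1) hB1 hB2)
  -- normalised forms of the Chevalley images
  have eE1 : E i = k • ((qNinv i * βs i) * β (i+1)) := by rw [hE, mul_assoc]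
  have eE2 : E (i+1) = k • (β (i+2) * (qNinv (i+1) * βs (i+1))) := by
    rw [hE]
    congr 1
    calc qNinv (i+1) * (βs (i+1) * β (i+1+1))
        = qNinv (i+1) * (β (i+2) * βs (i+1)) := by rw [c_βs1_β2.eq]
      _ = (qNinv (i+1) * β (i+2)) * βs (i+1) := by rw [mul_assoc]
      _ = (β (i+2) * qNinv (i+1)) * βs (i+1) := by rw [c_ν1_β2.eq]
      _ = β (i+2) * (qNinv (i+1) * βs (i+1)) := by rw [mul_assoc]
  have eF1 : F i = k • (β i * (qNinv (i+1) * βs (i+1))) := by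
    rw [hF]
    congr 1
    rw [← mul_assoc, ← c_βi_ν1.eq, mul_assoc]
  have eF2 : F (i+1) = k • ((qNinv (i+2) * βs (i+2)) * β (i+1)) := by
    rw [hF]
    congr 1
    calc qNinv (i+1+1) * (β (i+1) * βs (i+1+1))
        = qNinv (i+2) * (βs (i+2) * β (i+1)) := by rw [c_β1_βs2.eq]
      _ = (qNinv (i+2) * βs (i+2)) * β (i+1) := by rw [mul_assoc]
  refine ⟨?_, ?_, ?_, ?_⟩
  · rw [eE1, eE2]
    exact js_serre_reduce t k (qNinv i * βs i) (β (i+2)) (β (i+1))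
      (qNinv (i+1) * βs (i+1)) cac cab caB ccb ccB I1
  · rw [eE1, eE2]
    have hr := js_serre_reduce t k (β (i+2)) (qNinv i * βs i)
      (qNinv (i+1) * βs (i+1)) (β (i+1)) cac.symm ccB ccb caB cab I2
    linear_combination (norm := module) hr
  · rw [eF1, eF2]
    exact js_serre_reduce t k (β i) (qNinv (i+2) * βs (i+2))
      (qNinv (i+1) * βs (i+1)) (β (i+1)) ca'd ca'B ca'b cdB cdb I2
  · rw [eF1, eF2]
    have hr := js_serre_reduce t k (qNinv (i+2) * βs (i+2)) (β i)
      (β (i+1)) (qNinv (i+1) * βs (i+1)) ca'd.symm cdb cdB ca'b ca'B I1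
    linear_combination (norm := module) hr
end

section
/- The generators a_i = β*_{i+1} β_i (indices mod n, with a_n = z β*_1 β_n) of the affine quantum plactic algebra satisfy the quantum Knuth relations: a_{i+1} a_i² + t a_i² a_{i+1} = (1+t) a_i a_{i+1} a_i and a_{i+1}² a_i + t a_i a_{i+1}² = (1+t) a_{i+1} a_i a_{i+1}, where t = q², and moreover a_i a_j = a_j a_i whenever |i−j| mod n > 1. -/
private lemma swap4 {A : Type*} [Ring A] (p q r s : A) (h1 : p*r=r*p) (h2 : p*s=s*p)
    (h3 : q*r=r*q) (h4 : q*s=s*q) : (p*q)*(r*s) = (r*s)*(p*q) := by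
  calc (p*q)*(r*s) = p*(q*r*s) := by rw [mul_assoc, mul_assoc]
    _ = p*(r*q*s) := by rw [h3]
    _ = p*r*(q*s) := by rw [mul_assoc r q s, ← mul_assoc p r]
    _ = r*p*(q*s) := by rw [h1]
    _ = r*(p*(s*q)) := by rw [mul_assoc, h4]
    _ = r*(p*s*q) := by rw [← mul_assoc p s q]
    _ = r*(s*p*q) := by rw [h2]
    _ = r*s*(p*q) := by rw [mul_assoc s p q, ← mul_assoc r s]

private lemma cent_mul {A : Type*} [Ring A] (E p F q : A) (hF : ∀ y, F*y = y*F) :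
    (E*p)*(F*q) = E*(F*(p*q)) := by
  rw [mul_assoc, ← mul_assoc p F q, ← hF p, mul_assoc F p q]

private lemma cent_comm' {A : Type*} [Ring A] (F p q : A) (hF : ∀ y, F*y = y*F)
    (h : p*q = q*p) : (F*p)*q = q*(F*p) := by
  rw [mul_assoc, h, ← mul_assoc, hF q, mul_assoc]

private lemma knuth_abstract {K : Type*} [Field K] {A : Type*} [Ring A] [Algebra K A] (t : K)
    (X Y C : A) (h : Y * X = t • (X * Y) + (1 - t) • C)
    (hCX : C * X = X * C) (hCY : C * Y = Y * C) :
    Y * X ^ 2 + t • (X ^ 2 * Y) = (1 + t) • (X * Y * X) ∧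
    Y ^ 2 * X + t • (X * Y ^ 2) = (1 + t) • (Y * X * Y) := by
  have h1 : X * Y * X = t • (X * (X * Y)) + (1 - t) • (X * C) := by
    rw [mul_assoc, h, mul_add, mul_smul_comm, mul_smul_comm]
  have h2 : Y * (X * X) = t • (X * Y * X) + (1 - t) • (X * C) := by
    rw [← mul_assoc, h, add_mul, smul_mul_assoc, smul_mul_assoc, mul_assoc, hCX]
  have h3 : Y * (X * Y) = t • (X * (Y * Y)) + (1 - t) • (C * Y) := by
    rw [← mul_assoc, h, add_mul, smul_mul_assoc, smul_mul_assoc, mul_assoc]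
  have h4 : Y * (Y * X) = t • (Y * (X * Y)) + (1 - t) • (Y * C) := by
    rw [h, mul_add, mul_smul_comm, mul_smul_comm]
  constructor
  · rw [sq, h2, h1, mul_assoc X X Y]
    module
  · rw [sq, mul_assoc Y Y X, h4, mul_assoc Y X Y, h3, hCY]
    module

/-- The generators `a_i = β*_{i+1} β_i` (indices mod `n`, with
`a_n = z β*_1 β_n`; here sites are labelled by `ZMod n` with site `n` corresponding
to `0`) of the affine quantum plactic algebra satisfy the quantum Knuth relations
`a_{i+1} a_i² + t a_i² a_{i+1} = (1+t) a_i a_{i+1} a_i` and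
`a_{i+1}² a_i + t a_i a_{i+1}² = (1+t) a_{i+1} a_i a_{i+1}` (`t = q²`),
and `a_i a_j = a_j a_i` whenever `|i−j| mod n > 1`. -/
theorem affine_quantum_plactic_knuth {K : Type*} [Field K] {A : Type*} [Ring A] [Algebra K A]
    (n : ℕ) (hn : 2 < n) (t : K)
    (β βs : ZMod n → A) (z : A)
    (hz : ∀ x : A, z * x = x * z)
    (hcomm_ββ : ∀ i j : ZMod n, i ≠ j → β i * β j = β j * β i)
    (hcomm_βsβs : ∀ i j : ZMod n, i ≠ j → βs i * βs j = βs j * βs i)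
    (hcomm_ββs : ∀ i j : ZMod n, i ≠ j → β i * βs j = βs j * β i)
    (hrel : ∀ i : ZMod n, β i * βs i = t • (βs i * β i) + (1 - t) • (1 : A))
    (a : ZMod n → A)
    (ha : ∀ i : ZMod n, a i = (if i = 0 then z else 1) * (βs (i + 1) * β i)) :
    (∀ i : ZMod n,
      a (i + 1) * a i ^ 2 + t • (a i ^ 2 * a (i + 1)) = (1 + t) • (a i * a (i + 1) * a i) ∧
      a (i + 1) ^ 2 * a i + t • (a i * a (i + 1) ^ 2) = (1 + t) • (a (i + 1) * a i * a (i + 1))) ∧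
    (∀ i j : ZMod n, i ≠ j → i ≠ j + 1 → j ≠ i + 1 → a i * a j = a j * a i) := by
  haveI : Fact (1 < n) := ⟨by omega⟩
  haveI : NeZero n := ⟨by omega⟩
  have h1n : (1 : ZMod n) ≠ 0 := one_ne_zero
  have h2n : (2 : ZMod n) ≠ 0 := by
    have h : ((2:ℕ) : ZMod n) ≠ 0 := by
      rw [Ne, ZMod.natCast_eq_zero_iff]
      intro h; have := Nat.le_of_dvd (by norm_num) h; omega
    simpa using h
  have hE : ∀ k : ZMod n, ∀ y : A, (if k = 0 then z else 1) * y = y * (if k = 0 then z else 1) := by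
    intro k y; split
    · exact hz y
    · rw [one_mul, mul_one]
  constructor
  · intro i
    set E : A := if i = 0 then z else 1 with hEdef
    set F : A := if (i + 1 : ZMod n) = 0 then z else 1 with hFdef
    set u : A := β i with hu
    set v : A := βs (i + 1) with hv
    set w : A := β (i + 1) with hw
    set x : A := βs (i + 2) with hx
    have hEc : ∀ y : A, E*y = y*E := hE i
    have hFc : ∀ y : A, F*y = y*F := hE (i+1)
    have hEF : ∀ y : A, F*(E*y) = E*(F*y) := fun y => by
      rw [← mul_assoc, ← hEc F, mul_assoc]
    have d1 : i ≠ i + 1 := fun h => h1n (left_eq_add.mp h)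
    have d2 : i ≠ i + 2 := fun h => h2n (left_eq_add.mp h)
    have d3 : (i + 1 : ZMod n) ≠ i + 2 := fun h =>
      h1n (left_eq_add.mp (h.trans (by ring)))
    have huv : u*v = v*u := hcomm_ββs i (i+1) d1
    have hux : u*x = x*u := hcomm_ββs i (i+2) d2
    have huw : u*w = w*u := hcomm_ββ i (i+1) d1
    have hwx : w*x = x*w := hcomm_ββs (i+1) (i+2) d3
    have hvx : v*x = x*v := hcomm_βsβs (i+1) (i+2) d3
    have hwv : w*v = t•(v*w) + (1-t)•(1:A) := hrel (i+1)
    have haiX : a i = E * (v*u) := ha i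
    have hajY : a (i+1) = F * (x*w) := by
      rw [ha (i+1), show (i+1+1 : ZMod n) = i+2 from by ring]
    have hmid : x*((v*w)*u) = (v*u)*(x*w) := by
      calc x*((v*w)*u) = x*(v*(u*w)) := by rw [mul_assoc v w u, ← huw]
        _ = (x*v)*(u*w) := by rw [← mul_assoc]
        _ = (v*x)*(u*w) := by rw [← hvx]
        _ = v*((x*u)*w) := by rw [mul_assoc, ← mul_assoc x u w]
        _ = v*(u*(x*w)) := by rw [← hux, mul_assoc]
        _ = (v*u)*(x*w) := by rw [← mul_assoc]
    have hbase : (x*w)*(v*u) = t•((v*u)*(x*w)) + (1-t)•(x*u) := by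
      calc (x*w)*(v*u) = x*((w*v)*u) := by rw [mul_assoc, ← mul_assoc w v u]
        _ = x*((t•(v*w) + (1-t)•(1:A))*u) := by rw [hwv]
        _ = t•(x*((v*w)*u)) + (1-t)•(x*u) := by
            rw [add_mul, smul_mul_assoc, smul_mul_assoc, one_mul, mul_add,
              mul_smul_comm, mul_smul_comm]
        _ = t•((v*u)*(x*w)) + (1-t)•(x*u) := by rw [hmid]
    have hYX : a (i+1) * a i = t • (a i * a (i+1)) + (1-t) • (E*(F*(x*u))) := by
      rw [haiX, hajY, cent_mul F (x*w) E (v*u) hEc, hbase, mul_add, mul_add,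
        mul_smul_comm, mul_smul_comm, mul_smul_comm, mul_smul_comm,
        cent_mul E (v*u) F (x*w) hFc, hEF, hEF]
    have c0 : (v*u)*(x*u) = (x*u)*(v*u) := swap4 v u x u hvx huv.symm hux rfl
    have c1 : (x*u)*(a i) = a i*(x*u) := by
      rw [haiX]; exact (cent_comm' E (v*u) (x*u) hEc c0).symm
    have hCX : (E*(F*(x*u))) * a i = a i * (E*(F*(x*u))) :=
      cent_comm' E _ _ hEc (cent_comm' F _ _ hFc c1)
    have c0' : (x*w)*(x*u) = (x*u)*(x*w) := swap4 x w x u rfl hux.symm hwx huw.symm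
    have c1' : (x*u)*(a (i+1)) = a (i+1)*(x*u) := by
      rw [hajY]; exact (cent_comm' F (x*w) (x*u) hFc c0').symm
    have hCY : (E*(F*(x*u))) * a (i+1) = a (i+1) * (E*(F*(x*u))) :=
      cent_comm' E _ _ hEc (cent_comm' F _ _ hFc c1')
    exact knuth_abstract t (a i) (a (i+1)) (E*(F*(x*u))) hYX hCX hCY
  · intro i j hij hij1 hji1
    have hBij : (βs (i+1) * β i) * (βs (j+1) * β j) = (βs (j+1) * β j) * (βs (i+1) * β i) :=
      swap4 _ _ _ _
        (hcomm_βsβs (i+1) (j+1) (fun h => hij (add_right_cancel h)))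
        ((hcomm_ββs j (i+1) hji1).symm)
        (hcomm_ββs i (j+1) hij1)
        (hcomm_ββ i j hij)
    rw [ha i, ha j]
    exact cent_comm' _ _ _ (hE i) (cent_comm' _ _ _ (hE j) hBij.symm).symm
end

section
/- The L-operator L(u) = [[1, u β*],[β, u]] satisfies the Yang–Baxter equation R₁₂(u,v) L₁(u) L₂(v) = L₂(v) L₁(u) R₁₂(u,v), where R(u,v) is the 4×4 matrix with entries R = diag-blocks: (u−tv)/(u−v) on |00⟩ and |11⟩, and the middle 2×2 block [[t, (1−t)u/(u−v)],[(1−t)v/(u−v), 1]], with t = q². -/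
open Matrix

set_option maxHeartbeats 4000000 in
/-- The L-operator `L(u) = [[1, u β*],[β, u]]` satisfies the
Yang–Baxter equation `R₁₂(u,v) L₁(u) L₂(v) = L₂(v) L₁(u) R₁₂(u,v)`, where `R(u,v)` is
the 4×4 matrix with `(u−tv)/(u−v)` on the `|00⟩` and `|11⟩` diagonal entries and
middle 2×2 block `[[t, (1−t)u/(u−v)],[(1−t)v/(u−v), 1]]`, with `t = q²`. -/
theorem L_operator_yang_baxter {K : Type*} [Field K] {A : Type*} [Ring A] [Algebra K A]
    (t : K) (u v : K) (huv : u ≠ v)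
    (β βs : A)
    (hrel : β * βs - t • (βs * β) = (1 - t) • (1 : A))
    (L : K → Matrix (Fin 2) (Fin 2) A)
    (hL : ∀ w : K, L w = !![(1 : A), w • βs; β, w • (1 : A)])
    (Rk : Matrix (Fin 2 × Fin 2) (Fin 2 × Fin 2) K)
    (hRk : Rk = Matrix.of (fun p p' : Fin 2 × Fin 2 =>
      if p = (0, 0) ∧ p' = (0, 0) then (u - t * v) / (u - v)
      else if p = (1, 1) ∧ p' = (1, 1) then (u - t * v) / (u - v)
      else if p = (0, 1) ∧ p' = (0, 1) then t
      else if p = (0, 1) ∧ p' = (1, 0) then (1 - t) * u / (u - v)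
      else if p = (1, 0) ∧ p' = (0, 1) then (1 - t) * v / (u - v)
      else if p = (1, 0) ∧ p' = (1, 0) then 1
      else 0)) :
    (Rk.map (algebraMap K A)) *
        (Matrix.kroneckerMap (· * ·) (L u) (1 : Matrix (Fin 2) (Fin 2) A)) *
        (Matrix.kroneckerMap (· * ·) (1 : Matrix (Fin 2) (Fin 2) A) (L v)) =
      (Matrix.kroneckerMap (· * ·) (1 : Matrix (Fin 2) (Fin 2) A) (L v)) *
        (Matrix.kroneckerMap (· * ·) (L u) (1 : Matrix (Fin 2) (Fin 2) A)) *
        (Rk.map (algebraMap K A)) := by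
  have hc : u - v ≠ 0 := sub_ne_zero.mpr huv
  have hβ : β * βs = t • (βs * β) + (1 - t) • (1 : A) := by
    rw [← hrel]; abel
  subst hRk
  ext p p'
  obtain ⟨i, j⟩ := p
  obtain ⟨k, l⟩ := p'
  fin_cases i <;> fin_cases j <;> fin_cases k <;> fin_cases l <;>
  · simp [Matrix.mul_apply, Fintype.sum_prod_type, Fin.sum_univ_two, hL,
      Matrix.one_apply, Algebra.algebraMap_eq_smul_one, smul_mul_assoc,
      mul_smul_comm, smul_smul, hβ, mul_add, add_mul, smul_add,
      Prod.ext_iff, Prod.fst_zero, Prod.snd_zero, Prod.fst_one, Prod.snd_one]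
    try match_scalars <;> field_simp [hc] <;> ring
end

section
/- For a cylindric horizontal strip λ/d/μ with λ, μ ∈ A⁺_{k,n}, the cylindric weight functions satisfy Φ_{λ/d/μ}(t) = (b_λ(t)/b_μ(t)) Ψ_{λ/d/μ}(t), where Φ_{λ/d/μ}(t) = ∏_{i ∈ I} (1 − t^{m_i(λ)}), Ψ_{λ/d/μ}(t) = ∏_{i ∈ J} (1 − t^{m_i(μ)}), I = {i : λ'[d]_i − μ'[0]_i = 1 and λ'[d]_{i+1} − μ'[0]_{i+1} = 0}, J = {i : λ'[d]_i − μ'[0]_i = 0 and λ'[d]_{i+1} − μ'[0]_{i+1} = 1}, indices taken in 1,…,n with index n+1 identified with 1. -/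
open Finset

/-- For a cylindric horizontal strip `λ/d/μ` with `λ, μ ∈ A⁺_{k,n}`
(encoded by the conjugates `lam = λ'`, `mu = μ'` on `{1,…,n+1}` with `λ'_1 = μ'_1 = k`,
`λ'_{n+1} = μ'_{n+1} = 0`, and `λ'[d]_i = λ'_i + d` for `1 ≤ i ≤ n`, index `n+1`
identified with `1`), the cylindric weight functions satisfy
`Φ_{λ/d/μ}(t) = (b_λ(t)/b_μ(t)) Ψ_{λ/d/μ}(t)`, where
`Φ = ∏_{i∈I}(1 − t^{m_i(λ)})`, `Ψ = ∏_{i∈J}(1 − t^{m_i(μ)})`, with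
`I = {i : θ_i = 1, θ_{i+1} = 0}`, `J = {i : θ_i = 0, θ_{i+1} = 1}`,
`θ_i = λ'[d]_i − μ'[0]_i`. -/
theorem cylindric_Phi_Psi_identity {K : Type*} [Field K] (t : K)
    (ht : ∀ s : ℕ, 1 ≤ s → t ^ s ≠ 1)
    (k n d : ℕ) (hk : 0 < k) (hn : 0 < n)
    (lam mu : ℕ → ℕ)
    (hlamA : ∀ i j, 1 ≤ i → i ≤ j → j ≤ n + 1 → lam j ≤ lam i)
    (hmuA : ∀ i j, 1 ≤ i → i ≤ j → j ≤ n + 1 → mu j ≤ mu i)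
    (hlam1 : lam 1 = k) (hmu1 : mu 1 = k)
    (hlamtop : lam (n + 1) = 0) (hmutop : mu (n + 1) = 0)
    -- `λ/d/μ` is a cylindric horizontal strip: each column has at most one square
    (hstrip : ∀ i, 1 ≤ i → i ≤ n → mu i ≤ lam i + d ∧ lam i + d ≤ mu i + 1)
    (θ : ℕ → ℤ)
    (hθ : ∀ j, θ j = if j = n + 1 then ((lam 1 : ℤ) + d - mu 1)
      else ((lam j : ℤ) + d - mu j))
    (poch : ℕ → K) (hpoch : ∀ m, poch m = ∏ s ∈ Finset.range m, (1 - t ^ (s + 1)))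
    (b : (ℕ → ℕ) → K)
    (hb : ∀ f, b f = ∏ i ∈ Finset.Icc 1 n, poch (f i - f (i + 1)))
    (Φ Ψ : K)
    (hΦ : Φ = ∏ i ∈ (Finset.Icc 1 n).filter (fun i => θ i = 1 ∧ θ (i + 1) = 0),
      (1 - t ^ (lam i - lam (i + 1))))
    (hΨ : Ψ = ∏ i ∈ (Finset.Icc 1 n).filter (fun i => θ i = 0 ∧ θ (i + 1) = 1),
      (1 - t ^ (mu i - mu (i + 1)))) :
    Φ = (b lam / b mu) * Ψ := by
  have hd : d ≤ 1 := by
    have h1 := hstrip 1 le_rfl hn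
    omega
  have hpochsucc : ∀ m, poch (m+1) = poch m * (1 - t^(m+1)) := fun m => by
    rw [hpoch, hpoch, Finset.prod_range_succ]
  have hpochne : ∀ m, poch m ≠ 0 := by
    intro m
    rw [hpoch]
    apply Finset.prod_ne_zero_iff.mpr
    intro s _
    intro h
    exact ht (s+1) (by omega) (eq_of_sub_eq_zero h).symm
  have hbmu : b mu ≠ 0 := by
    rw [hb]
    exact Finset.prod_ne_zero_iff.mpr (fun i _ => hpochne _)
  have key : Φ * b mu = b lam * Ψ := by
    rw [hΦ, hΨ, hb, hb, Finset.prod_filter, Finset.prod_filter,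
      ← Finset.prod_mul_distrib, ← Finset.prod_mul_distrib]
    apply Finset.prod_congr rfl
    intro i hi
    simp only [Finset.mem_Icc] at hi
    have hθi : θ i = (lam i : ℤ) + d - mu i := by
      rw [hθ]
      rw [if_neg (by omega)]
    have hθi1 : θ (i+1) = (lam (i+1) : ℤ) + d - mu (i+1) := by
      rw [hθ]
      split
      · next h =>
        have h1 : i + 1 = n + 1 := h
        rw [h1, hlam1, hmu1, hlamtop, hmutop]
        push_cast
        try ring
      · rfl
    have hsi := hstrip i hi.1 hi.2
    have hsl : lam (i+1) ≤ lam i := hlamA i (i+1) hi.1 (by omega) (by omega)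
    have hsm : mu (i+1) ≤ mu i := hmuA i (i+1) hi.1 (by omega) (by omega)
    have h01 : θ i = 0 ∨ θ i = 1 := by omega
    have h01' : θ (i+1) = 0 ∨ θ (i+1) = 1 := by
      rcases lt_or_eq_of_le hi.2 with h | h
      · have := hstrip (i+1) (by omega) (by omega)
        omega
      · rw [h] at hθi1 ⊢
        omega
    rcases h01 with h0 | h1 <;> rcases h01' with g0 | g1
    · have hab : lam i - lam (i+1) = mu i - mu (i+1) := by omega
      simp [h0, g0, hab]
    · have hab : mu i - mu (i+1) = (lam i - lam (i+1)) + 1 := by omega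
      rw [hab, hpochsucc]
      simp [h0, g1]
      try ring
    · have hab : lam i - lam (i+1) = (mu i - mu (i+1)) + 1 := by omega
      rw [hab, hpochsucc]
      simp [h1, g0]
      try ring
    · have hab : lam i - lam (i+1) = mu i - mu (i+1) := by omega
      simp [h1, g1, hab]
  rw [div_mul_eq_mul_div, eq_div_iff hbmu, key]
end

section
/- If y = (y₁,…,y_k) are invertible elements satisfying the Bethe ansatz equations y_i^n ∏_{j≠i} (y_i − t y_j)/(y_i − y_j) = z ∏_{j≠i} (t y_i − y_j)/(y_i − y_j) for all i, then g_{n−r}(y₁,…,y_k;t) = z g_r(y₁^{−1},…,y_k^{−1};t) for all 0 < r < n, where g_r(y;t) = (1−t) Σ_{i=1}^k y_i^r ∏_{j≠i}(y_i − t y_j)/(y_i − y_j). -/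
open Finset

/-- If `y = (y₁,…,y_k)` are invertible elements satisfying the Bethe
ansatz equations `y_i^n ∏_{j≠i} (y_i − t y_j)/(y_i − y_j) = z ∏_{j≠i} (t y_i − y_j)/(y_i − y_j)`
for all `i`, then `g_{n−r}(y;t) = z g_r(y⁻¹;t)` for all `0 < r < n`, where
`g_r(v;t) = (1−t) Σ_i v_i^r ∏_{j≠i}(v_i − t v_j)/(v_i − v_j)`. -/
theorem bethe_g_duality {K : Type*} [Field K] (k n : ℕ) (hk : 0 < k) (hn : 2 < n)
    (t z : K) (y : Fin k → K)
    (hy0 : ∀ i, y i ≠ 0) (hyinj : Function.Injective y)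
    (bae : ∀ i : Fin k,
      y i ^ n * ∏ j ∈ Finset.univ.erase i, (y i - t * y j) / (y i - y j)
        = z * ∏ j ∈ Finset.univ.erase i, (t * y i - y j) / (y i - y j))
    (g : (Fin k → K) → ℕ → K)
    (hg : ∀ v m, g v m = (1 - t) * ∑ i : Fin k, v i ^ m *
      ∏ j ∈ Finset.univ.erase i, (v i - t * v j) / (v i - v j)) :
    ∀ r : ℕ, 0 < r → r < n → g y (n - r) = z * g (fun i => (y i)⁻¹) r := by
  intro r hr hrn
  have key : ∑ i : Fin k, y i ^ (n - r) *
      ∏ j ∈ Finset.univ.erase i, (y i - t * y j) / (y i - y j)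
      = z * ∑ i : Fin k, (y i)⁻¹ ^ r *
      ∏ j ∈ Finset.univ.erase i, ((y i)⁻¹ - t * (y j)⁻¹) / ((y i)⁻¹ - (y j)⁻¹) := by
    rw [Finset.mul_sum]
    refine Finset.sum_congr rfl fun i _ => ?_
    have hQ : ∏ j ∈ Finset.univ.erase i, ((y i)⁻¹ - t * (y j)⁻¹) / ((y i)⁻¹ - (y j)⁻¹)
        = ∏ j ∈ Finset.univ.erase i, (t * y i - y j) / (y i - y j) := by
      refine Finset.prod_congr rfl fun j hj => ?_
      have hji : y i - y j ≠ 0 := sub_ne_zero.mpr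
        (fun h => (Finset.mem_erase.mp hj).1 (hyinj h).symm)
      have hi := hy0 i
      have hj' := hy0 j
      have hd : (y i)⁻¹ - (y j)⁻¹ ≠ 0 := by
        intro h
        apply hji
        field_simp at h
        linear_combination -h
      rw [div_eq_div_iff hd hji]
      field_simp
      ring
    rw [hQ]
    have hyr : y i ^ r ≠ 0 := pow_ne_zero r (hy0 i)
    apply mul_left_cancel₀ hyr
    have hpow : y i ^ r * y i ^ (n - r) = y i ^ n := by
      rw [← pow_add]; congr 1; omega
    rw [← mul_assoc, hpow, bae i]
    conv_rhs => rw [inv_pow, mul_left_comm, mul_inv_cancel_left₀ hyr]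
  rw [hg, hg]
  calc (1 - t) * ∑ i : Fin k, y i ^ (n - r) *
      ∏ j ∈ Finset.univ.erase i, (y i - t * y j) / (y i - y j)
      = (1 - t) * (z * ∑ i : Fin k, (y i)⁻¹ ^ r *
        ∏ j ∈ Finset.univ.erase i, ((y i)⁻¹ - t * (y j)⁻¹) / ((y i)⁻¹ - (y j)⁻¹)) := by
        rw [key]
    _ = z * ((1 - t) * ∑ i : Fin k, (y i)⁻¹ ^ r *
        ∏ j ∈ Finset.univ.erase i, ((y i)⁻¹ - t * (y j)⁻¹) / ((y i)⁻¹ - (y j)⁻¹)) := by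
        ring
end

section
/- For λ ∈ A⁺_{k,n} and y a solution of the Bethe ansatz equations (with parameter z), the Hall–Littlewood R-function satisfies the inversion identity R_λ(y₁,…,y_k;t) = z^k R_{(n−λ_k,…,n−λ₂,n−λ₁)}(y₁^{−1},…,y_k^{−1};t), where R_λ(x;t) = Σ_{w∈S_k} w( x^λ ∏_{i<j}(x_i − t x_j)/(x_i − x_j) ). -/
open Finset

/-- If there is a cyclic `t`-string among the values of `v`, every term of the
Hall–Littlewood permutation sum vanishes. -/
lemma bethe_sum_perm_eq_zero {K : Type*} [Field K] {k : ℕ} (t : K) (v : Fin k → K)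
    (hv0 : ∀ i, v i ≠ 0) (ht1 : t ≠ 1)
    (c : ℕ → Fin k) (m : ℕ) (hm : 1 ≤ m) (hcm : c m = c 0)
    (hrel : ∀ s, v (c (s + 1)) = t * v (c s)) (μ : Fin k → ℕ) :
    ∑ w : Equiv.Perm (Fin k),
      (∏ i : Fin k, v (w i) ^ μ i) *
        ∏ p ∈ Finset.univ.filter (fun p : Fin k × Fin k => p.1 < p.2),
          (v (w p.1) - t * v (w p.2)) / (v (w p.1) - v (w p.2)) = 0 := by
  apply Finset.sum_eq_zero
  intro w _
  have key : ∃ s, w⁻¹ (c (s + 1)) < w⁻¹ (c s) := by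
    by_contra h
    push_neg at h
    have hne : ∀ s, w⁻¹ (c s) ≠ w⁻¹ (c (s + 1)) := by
      intro s heq
      have hcc : c s = c (s + 1) := (w⁻¹ : Equiv.Perm (Fin k)).injective heq
      have h1 : v (c s) = t * v (c s) := by
        conv_lhs => rw [hcc]
        rw [hrel s, hcc]
      have h2 : (1 : K) * v (c s) = t * v (c s) := by rw [one_mul]; exact h1
      exact ht1 (mul_right_cancel₀ (hv0 _) h2).symm
    have mono : StrictMono (fun s => w⁻¹ (c s)) :=
      strictMono_nat_of_lt_succ (fun s => lt_of_le_of_ne (h s) (hne s))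
    have : w⁻¹ (c 0) < w⁻¹ (c m) := mono hm
    rw [hcm] at this
    exact lt_irrefl _ this
  obtain ⟨s, hs⟩ := key
  have hmem : (w⁻¹ (c (s + 1)), w⁻¹ (c s)) ∈
      Finset.univ.filter (fun p : Fin k × Fin k => p.1 < p.2) := by
    simp only [Finset.mem_filter, Finset.mem_univ, true_and]; exact hs
  have hfac : (v (w (w⁻¹ (c (s + 1)))) - t * v (w (w⁻¹ (c s)))) /
      (v (w (w⁻¹ (c (s + 1)))) - v (w (w⁻¹ (c s)))) = 0 := by
    rw [Equiv.Perm.inv_def, Equiv.apply_symm_apply, Equiv.apply_symm_apply, hrel s, sub_self, zero_div]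
  rw [Finset.prod_eq_zero hmem hfac, mul_zero]

lemma bethe_exists_chain {α : Type*} (P : α → Prop) (r : α → α → Prop) (a : α) (ha : P a)
    (hstep : ∀ i, P i → ∃ j, r i j ∧ P j) :
    ∃ c : ℕ → α, ∀ s, r (c s) (c (s + 1)) := by
  classical
  let g : α → α := fun i => if h : P i then (hstep i h).choose else a
  have hg : ∀ i, P i → r i (g i) ∧ P (g i) := by
    intro i h
    simp only [g, dif_pos h]
    exact ⟨(hstep i h).choose_spec.1, (hstep i h).choose_spec.2⟩
  have hP : ∀ s, P (g^[s] a) := by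
    intro s
    induction s with
    | zero => simpa using ha
    | succ s ih => rw [Function.iterate_succ_apply']; exact (hg _ ih).2
  refine ⟨fun s => g^[s] a, fun s => ?_⟩
  show r (g^[s] a) (g^[s+1] a)
  rw [Function.iterate_succ_apply']
  exact (hg _ (hP s)).1

lemma bethe_cycle_of_chain {k : ℕ} (r : Fin k → Fin k → Prop) (c : ℕ → Fin k)
    (hc : ∀ s, r (c s) (c (s + 1))) :
    ∃ c' : ℕ → Fin k, ∃ m, 1 ≤ m ∧ c' m = c' 0 ∧ ∀ s, r (c' s) (c' (s + 1)) := by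
  obtain ⟨u, v, huv, he⟩ := Finite.exists_ne_map_eq_of_infinite c
  have h2 : ∃ u v, u < v ∧ c u = c v := by
    rcases lt_or_gt_of_ne huv with h | h
    exacts [⟨u, v, h, he⟩, ⟨v, u, h, he.symm⟩]
  obtain ⟨u, v, huv, he⟩ := h2
  refine ⟨fun s => c (u + s), v - u, by omega, ?_, fun s => ?_⟩
  · show c (u + (v - u)) = c (u + 0)
    rw [show u + (v - u) = v by omega, Nat.add_zero, ← he]
  · have := hc (u + s)
    rwa [show u + s + 1 = u + (s + 1) by omega] at this

/-- Reverse a `t`-string cycle. -/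
lemma bethe_cycle_rev {K : Type*} [Field K] {k : ℕ} {t : K} {v : Fin k → K}
    (hinj : Function.Injective v)
    (c : ℕ → Fin k) (m : ℕ) (hm : 1 ≤ m) (hcm : c m = c 0)
    (hrel : ∀ s, v (c (s + 1)) = t * v (c s)) :
    ∃ c' : ℕ → Fin k, c' m = c' 0 ∧ ∀ s, v (c' s) = t * v (c' (s + 1)) := by
  have per : ∀ s, c (s + m) = c s := by
    intro s
    induction s with
    | zero => simpa using hcm
    | succ a ih =>
      have h1 := hrel (a + m)
      rw [ih] at h1
      rw [← hrel a] at h1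
      have : a + m + 1 = a + 1 + m := by omega
      rw [this] at h1
      exact hinj h1
  have perm : ∀ j s, c (s + j * m) = c s := by
    intro j
    induction j with
    | zero => simp
    | succ j ih =>
      intro s
      have : s + (j + 1) * m = s + j * m + m := by ring
      rw [this, per, ih]
  refine ⟨fun s => c ((m - 1) * s), ?_, fun s => ?_⟩
  · show c ((m - 1) * m) = c ((m - 1) * 0)
    have h1 : (m - 1) * m = 0 + (m - 1) * m := by omega
    rw [h1, perm, Nat.mul_zero]
  · have h1 := hrel ((m - 1) * s + (m - 1))
    have e1 : (m - 1) * s + (m - 1) + 1 = (m - 1) * s + m := by omega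
    have e2 : (m - 1) * s + (m - 1) = (m - 1) * (s + 1) := by ring
    rw [e1, per] at h1
    rw [e2] at h1
    exact h1

lemma bethe_inv_frac {K : Type*} [Field K] (t u w : K) (hu : u ≠ 0) (hw : w ≠ 0) :
    (u⁻¹ - t * w⁻¹) / (u⁻¹ - w⁻¹) = (w - t * u) / (w - u) := by
  rcases eq_or_ne u w with h | h
  · rw [h, sub_self, div_zero, sub_self, div_zero]
  · have h1 : u⁻¹ - w⁻¹ ≠ 0 := sub_ne_zero.mpr (fun hc => h (inv_injective hc))
    have h2 : w - u ≠ 0 := sub_ne_zero.mpr (Ne.symm h)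
    have e1 : u⁻¹ - t * w⁻¹ = (w - t * u) / (u * w) := by field_simp
    have e2 : u⁻¹ - w⁻¹ = (w - u) / (u * w) := by field_simp
    rw [e1, e2, div_div_div_cancel_right₀]
    exact mul_ne_zero hu hw

/-- Product of the Bethe ansatz equations in the nondegenerate case. -/
lemma bethe_prod_eq {K : Type*} [Field K] {k n : ℕ} (hk : 0 < k) {t z : K} {y : Fin k → K}
    (hy0 : ∀ i, y i ≠ 0) (hyinj : Function.Injective y)
    (bae : ∀ i : Fin k,
      y i ^ n * ∏ j ∈ Finset.univ.erase i, (y i - t * y j) / (y i - y j)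
        = z * ∏ j ∈ Finset.univ.erase i, (t * y i - y j) / (y i - y j))
    (hnd : ∀ i j : Fin k, i ≠ j → y i - t * y j ≠ 0) :
    (∏ i, y i) ^ n = z ^ k := by
  have hsub : ∀ i j : Fin k, i ≠ j → y i - y j ≠ 0 := fun i j hij =>
    sub_ne_zero.mpr (fun hc => hij (hyinj hc))
  have hprod := Finset.prod_congr rfl (fun i (_ : i ∈ (univ : Finset (Fin k))) => bae i)
  simp only [Finset.prod_div_distrib] at hprod
  rw [Finset.prod_mul_distrib, Finset.prod_mul_distrib, Finset.prod_pow, Finset.prod_const,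
    Finset.card_univ, Fintype.card_fin] at hprod
  simp only [Finset.prod_div_distrib] at hprod
  set P := ∏ i : Fin k, ∏ j ∈ univ.erase i, (y i - t * y j) with hP
  set Q := ∏ i : Fin k, ∏ j ∈ univ.erase i, (t * y i - y j) with hQ
  set D := ∏ i : Fin k, ∏ j ∈ univ.erase i, (y i - y j) with hD
  have hPQ : Q = P := by
    have hswap : Q = ∏ i : Fin k, ∏ j ∈ univ.erase i, (t * y j - y i) := by
      rw [hQ]
      exact Finset.prod_comm' (by intro x y; simp [Finset.mem_erase, ne_comm, eq_comm])
    rw [hswap]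
    have : ∀ i : Fin k, ∏ j ∈ univ.erase i, (t * y j - y i)
        = (-1 : K) ^ (k - 1) * ∏ j ∈ univ.erase i, (y i - t * y j) := by
      intro i
      have hcard : (univ.erase i).card = k - 1 := by
        rw [Finset.card_erase_of_mem (mem_univ i), Finset.card_univ, Fintype.card_fin]
      rw [← hcard, ← Finset.prod_const, ← Finset.prod_mul_distrib]
      exact Finset.prod_congr rfl (fun j _ => by ring)
    rw [Finset.prod_congr rfl (fun i _ => this i), Finset.prod_mul_distrib,
      Finset.prod_const, Finset.card_univ, Fintype.card_fin, ← hP, ← pow_mul]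
    have heven : Even ((k - 1) * k) := by
      rcases Nat.even_or_odd k with h | h
      · exact h.mul_left _
      · have : Even (k - 1) := by
          rcases h with ⟨c, hc⟩; exact ⟨c, by omega⟩
        exact this.mul_right _
    rw [heven.neg_one_pow, one_mul]
  have hDne : D ≠ 0 := Finset.prod_ne_zero_iff.mpr (fun i _ =>
    Finset.prod_ne_zero_iff.mpr (fun j hj => hsub i j (Ne.symm (Finset.mem_erase.mp hj).1)))
  have hPne : P ≠ 0 := Finset.prod_ne_zero_iff.mpr (fun i _ =>
    Finset.prod_ne_zero_iff.mpr (fun j hj => hnd i j (Ne.symm (Finset.mem_erase.mp hj).1)))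
  rw [hPQ] at hprod
  have hfrac : P / D ≠ 0 := div_ne_zero hPne hDne
  exact mul_right_cancel₀ hfrac hprod

lemma bethe_sum_reindex {K : Type*} [Field K] {k n : ℕ} (t : K) (y : Fin k → K)
    (hy0 : ∀ i, y i ≠ 0) (lam : Fin k → ℕ) (hub : ∀ i, lam i ≤ n) :
    ∑ w : Equiv.Perm (Fin k),
      (∏ i : Fin k, (y (w i))⁻¹ ^ (n - lam (Fin.rev i))) *
        ∏ p ∈ Finset.univ.filter (fun p : Fin k × Fin k => p.1 < p.2),
          ((y (w p.1))⁻¹ - t * (y (w p.2))⁻¹) / ((y (w p.1))⁻¹ - (y (w p.2))⁻¹)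
    = ((∏ i, y i) ^ n)⁻¹ *
      ∑ w : Equiv.Perm (Fin k),
        (∏ i : Fin k, y (w i) ^ lam i) *
          ∏ p ∈ Finset.univ.filter (fun p : Fin k × Fin k => p.1 < p.2),
            (y (w p.1) - t * y (w p.2)) / (y (w p.1) - y (w p.2)) := by
  rw [Finset.mul_sum]
  rw [← Equiv.sum_comp (Equiv.mulRight Fin.revPerm) (fun w : Equiv.Perm (Fin k) =>
    ((∏ i, y i) ^ n)⁻¹ * ((∏ i : Fin k, y (w i) ^ lam i) *
      ∏ p ∈ Finset.univ.filter (fun p : Fin k × Fin k => p.1 < p.2),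
        (y (w p.1) - t * y (w p.2)) / (y (w p.1) - y (w p.2))))]
  apply Finset.sum_congr rfl
  intro σ _
  simp only [Equiv.coe_mulRight, Equiv.Perm.mul_apply, Fin.revPerm_apply]
  have hmono : ∏ i : Fin k, (y (σ i))⁻¹ ^ (n - lam (Fin.rev i))
      = (∏ i : Fin k, y (σ (Fin.rev i)) ^ lam i) * ((∏ i, y i) ^ n)⁻¹ := by
    have h1 : ∀ i : Fin k, (y (σ i))⁻¹ ^ (n - lam (Fin.rev i))
        = y (σ i) ^ lam (Fin.rev i) * ((y (σ i)) ^ n)⁻¹ := by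
      intro i
      rw [inv_pow, pow_sub₀ _ (hy0 _) (hub _)]
      rw [mul_inv, inv_inv, mul_comm]
    rw [Finset.prod_congr rfl (fun i _ => h1 i), Finset.prod_mul_distrib,
      Finset.prod_inv_distrib]
    congr 1
    · have h2 := Equiv.prod_comp Fin.revPerm (fun i => y (σ (Fin.rev i)) ^ lam i)
      simp only [Fin.revPerm_apply, Fin.rev_rev] at h2
      exact h2
    · congr 1
      rw [Equiv.prod_comp σ (fun i => y i ^ n), Finset.prod_pow]
  have hpair : (∏ p ∈ Finset.univ.filter (fun p : Fin k × Fin k => p.1 < p.2),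
        ((y (σ p.1))⁻¹ - t * (y (σ p.2))⁻¹) / ((y (σ p.1))⁻¹ - (y (σ p.2))⁻¹))
      = ∏ p ∈ Finset.univ.filter (fun p : Fin k × Fin k => p.1 < p.2),
          (y (σ (Fin.rev p.1)) - t * y (σ (Fin.rev p.2)))
            / (y (σ (Fin.rev p.1)) - y (σ (Fin.rev p.2))) := by
    rw [Finset.prod_congr rfl (fun p _ => bethe_inv_frac t _ _ (hy0 _) (hy0 _))]
    refine Finset.prod_nbij' (fun p : Fin k × Fin k => (p.2.rev, p.1.rev))
      (fun p : Fin k × Fin k => (p.2.rev, p.1.rev)) ?_ ?_ ?_ ?_ ?_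
    · intro p hp
      simp only [Finset.mem_filter, Finset.mem_univ, true_and] at hp ⊢
      exact Fin.rev_lt_rev.mpr hp
    · intro p hp
      simp only [Finset.mem_filter, Finset.mem_univ, true_and] at hp ⊢
      exact Fin.rev_lt_rev.mpr hp
    · intro p _; simp [Fin.rev_rev]
    · intro p _; simp [Fin.rev_rev]
    · intro p _; simp [Fin.rev_rev]
  rw [hmono, hpair]
  ring


/-- For `λ ∈ A⁺_{k,n}` (i.e. `n ≥ λ₁ ≥ ⋯ ≥ λ_k ≥ 1`) and `y` a
solution of the Bethe ansatz equations with parameter `z`, the Hall–Littlewood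
R-function satisfies the inversion identity
`R_λ(y;t) = z^k R_{(n−λ_k,…,n−λ₂,n−λ₁)}(y⁻¹;t)`, where
`R_μ(v;t) = Σ_{w∈S_k} w(v^μ ∏_{i<j}(v_i − t v_j)/(v_i − v_j))`. -/
theorem bethe_R_inversion {K : Type*} [Field K] (k n : ℕ) (hk : 0 < k) (hn : 0 < n)
    (t z : K) (y : Fin k → K)
    (hy0 : ∀ i, y i ≠ 0) (hyinj : Function.Injective y)
    (bae : ∀ i : Fin k,
      y i ^ n * ∏ j ∈ Finset.univ.erase i, (y i - t * y j) / (y i - y j)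
        = z * ∏ j ∈ Finset.univ.erase i, (t * y i - y j) / (y i - y j))
    (lam : Fin k → ℕ)
    (hanti : ∀ i j : Fin k, i ≤ j → lam j ≤ lam i)
    (hub : ∀ i, lam i ≤ n) (hlb : ∀ i, 1 ≤ lam i)
    (R : (Fin k → K) → (Fin k → ℕ) → K)
    (hR : ∀ v μ, R v μ = ∑ w : Equiv.Perm (Fin k),
      (∏ i : Fin k, v (w i) ^ μ i) *
        ∏ p ∈ Finset.univ.filter (fun p : Fin k × Fin k => p.1 < p.2),
          (v (w p.1) - t * v (w p.2)) / (v (w p.1) - v (w p.2))) :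
    R y lam = z ^ k * R (fun i => (y i)⁻¹) (fun i => n - lam (Fin.rev i)) := by
  by_cases hd : ∃ a b : Fin k, a ≠ b ∧ y a = t * y b
  · -- degenerate case : both sides vanish
    obtain ⟨a, b, hab, hyab⟩ := hd
    have ht0 : t ≠ 0 := fun h => hy0 a (by rw [hyab, h, zero_mul])
    have ht1 : t ≠ 1 := fun h => hab (hyinj (by rw [hyab, h, one_mul]))
    have hvinj : Function.Injective (fun i => (y i)⁻¹) := fun i j h =>
      hyinj (inv_injective h)
    have hcycF : ∃ c : ℕ → Fin k, ∃ m, 1 ≤ m ∧ c m = c 0 ∧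
        ∀ s, y (c (s + 1)) = t * y (c s) := by
      by_cases hz : z = 0
      · -- z = 0 : every index has a `t`-predecessor
        have pred : ∀ i : Fin k, ∃ j, j ≠ i ∧ y i = t * y j := by
          intro i
          have hbi := bae i
          rw [hz, zero_mul] at hbi
          have h0 : ∏ j ∈ univ.erase i, (y i - t * y j) / (y i - y j) = 0 := by
            rcases mul_eq_zero.mp hbi with h | h
            · exact absurd h (pow_ne_zero _ (hy0 i))
            · exact h
          obtain ⟨j, hjmem, hj⟩ := Finset.prod_eq_zero_iff.mp h0
          have hjne : j ≠ i := (Finset.mem_erase.mp hjmem).1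
          have hden : y i - y j ≠ 0 :=
            sub_ne_zero.mpr (fun h => hjne (hyinj h).symm)
          have hnum : y i - t * y j = 0 := by
            rcases div_eq_zero_iff.mp hj with h | h
            · exact h
            · exact absurd h hden
          exact ⟨j, hjne, sub_eq_zero.mp hnum⟩
        obtain ⟨c, hc⟩ := bethe_exists_chain (fun _ => True)
          (fun i j => y i = t * y j) a trivial
          (fun i _ => by
            obtain ⟨j, _, hj⟩ := pred i
            exact ⟨j, hj, trivial⟩)
        have hc' : ∀ s, (y (c (s + 1)))⁻¹ = t * (y (c s))⁻¹ := by
          intro s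
          rw [hc s, mul_inv, ← mul_assoc, mul_inv_cancel₀ ht0, one_mul]
        obtain ⟨c1, m, hm, hc1m, hc1⟩ := bethe_cycle_of_chain
          (fun i j => (y j)⁻¹ = t * (y i)⁻¹) c hc'
        obtain ⟨c2, hc2m, hc2⟩ := bethe_cycle_rev (v := fun i => (y i)⁻¹)
          hvinj c1 m hm hc1m (fun s => hc1 s)
        refine ⟨c2, m, hm, hc2m, fun s => ?_⟩
        have h := hc2 s
        -- h : (y (c2 s))⁻¹ = t * (y (c2 (s+1)))⁻¹
        have h2 := congrArg (fun x : K => x⁻¹) h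
        simp only [mul_inv, inv_inv] at h2
        -- h2 : y (c2 s) = t⁻¹ * y (c2 (s+1))
        rw [h2, ← mul_assoc, mul_inv_cancel₀ ht0, one_mul]
      · -- z ≠ 0 : build a forward chain
        have step : ∀ i : Fin k, (∃ j, j ≠ i ∧ y i = t * y j) →
            ∃ j, y j = t * y i ∧ ∃ j', j' ≠ j ∧ y j = t * y j' := by
          intro i ⟨j0, hj0, hij⟩
          have hL : ∏ j ∈ univ.erase i, (y i - t * y j) / (y i - y j) = 0 :=
            Finset.prod_eq_zero (Finset.mem_erase.mpr ⟨hj0, mem_univ _⟩)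
              (by rw [hij, sub_self, zero_div])
          have hbi := bae i
          rw [hL, mul_zero] at hbi
          have hR0 : ∏ j ∈ univ.erase i, (t * y i - y j) / (y i - y j) = 0 := by
            rcases mul_eq_zero.mp hbi.symm with h | h
            · exact absurd h hz
            · exact h
          obtain ⟨j, hjmem, hj⟩ := Finset.prod_eq_zero_iff.mp hR0
          have hjne : j ≠ i := (Finset.mem_erase.mp hjmem).1
          have hden : y i - y j ≠ 0 :=
            sub_ne_zero.mpr (fun h => hjne (hyinj h).symm)
          have hnum : t * y i - y j = 0 := by
            rcases div_eq_zero_iff.mp hj with h | h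
            · exact h
            · exact absurd h hden
          exact ⟨j, (sub_eq_zero.mp hnum).symm, i, hjne.symm,
            (sub_eq_zero.mp hnum).symm⟩
        obtain ⟨c, hc⟩ := bethe_exists_chain
          (fun i => ∃ j, j ≠ i ∧ y i = t * y j)
          (fun i j => y j = t * y i) a ⟨b, hab.symm, hyab⟩
          (fun i hi => by
            obtain ⟨j, hj1, hj2⟩ := step i hi
            exact ⟨j, hj1, hj2⟩)
        obtain ⟨c', m, hm, hcm, hrel⟩ := bethe_cycle_of_chain
          (fun i j => y j = t * y i) c hc
        exact ⟨c', m, hm, hcm, hrel⟩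
    obtain ⟨c, m, hm, hcm, hrelF⟩ := hcycF
    obtain ⟨c2, hc2m, hrelR⟩ := bethe_cycle_rev hyinj c m hm hcm hrelF
    rw [hR, hR]
    have h1 := bethe_sum_perm_eq_zero t y hy0 ht1 c m hm hcm hrelF lam
    have h2 := bethe_sum_perm_eq_zero t (fun i => (y i)⁻¹)
      (fun i => inv_ne_zero (hy0 i)) ht1 c2 m hm hc2m
      (fun s => by
        show (y (c2 (s + 1)))⁻¹ = t * (y (c2 s))⁻¹
        rw [hrelR s, mul_inv, ← mul_assoc, mul_inv_cancel₀ ht0, one_mul])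
      (fun i => n - lam (Fin.rev i))
    rw [h1, h2, mul_zero]
  · -- nondegenerate case
    push_neg at hd
    have hnd : ∀ i j : Fin k, i ≠ j → y i - t * y j ≠ 0 := fun i j h =>
      sub_ne_zero.mpr (hd i j h)
    have hyP : (∏ i, y i) ^ n ≠ 0 :=
      pow_ne_zero _ (Finset.prod_ne_zero_iff.mpr fun i _ => hy0 i)
    rw [hR, hR]
    rw [show (∑ w : Equiv.Perm (Fin k),
        (∏ i : Fin k, (fun i => (y i)⁻¹) (w i) ^ (fun i => n - lam (Fin.rev i)) i) *
          ∏ p ∈ Finset.univ.filter (fun p : Fin k × Fin k => p.1 < p.2),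
            ((fun i => (y i)⁻¹) (w p.1) - t * (fun i => (y i)⁻¹) (w p.2)) /
              ((fun i => (y i)⁻¹) (w p.1) - (fun i => (y i)⁻¹) (w p.2)))
      = ((∏ i, y i) ^ n)⁻¹ *
        ∑ w : Equiv.Perm (Fin k),
          (∏ i : Fin k, y (w i) ^ lam i) *
            ∏ p ∈ Finset.univ.filter (fun p : Fin k × Fin k => p.1 < p.2),
              (y (w p.1) - t * y (w p.2)) / (y (w p.1) - y (w p.2))
      from bethe_sum_reindex t y hy0 lam hub]
    rw [← bethe_prod_eq hk hy0 hyinj bae hnd, ← mul_assoc, mul_inv_cancel₀ hyP, one_mul]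
end
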